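/- Let Z be a finite latent space and let p, p' : Z → ℝ be two functions with p(z) > 0 and p'(z) > 0 for all z (representing the complete-data likelihoods z ↦ P(X, z | θ) and z ↦ P(X, z | θ') at two parameter values). Let P = Σ_z p(z) and define the posterior q(z) = p(z)/P. If the EM Q-function does not decrease, i.e. Σ_z q(z)·log p'(z) ≥ Σ_z q(z)·log p(z), then the observed-data likelihood does not decrease: Σ_z p'(z) ≥ Σ_z p(z). (Monotonicity of the EM iteration: each E-step/M-step cycle does not decrease P(W | θ).) -/

import Mathlib

/-!
Since `log x ≤ x - 1`, each term satisfies `p z (log p' z - log p z) ≤ p' z - p z`. Summing, the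
increase of the `Q`-function, scaled by `P = Σ_z p z`, is at most `Σ_z p' z - Σ_z p z`; so a
non-negative increase forces `Σ_z p' z ≥ Σ_z p z`.
-/

open Finset Real

theorem Real.mul_log_sub_log_le_sub {x y : ℝ} (hx : 0 < x) (hy : 0 < y) :
    x * (log y - log x) ≤ y - x := by
  have hlog : log y - log x ≤ y / x - 1 := by
    rw [← log_div hy.ne' hx.ne']
    exact log_le_sub_one_of_pos (div_pos hy hx)
  calc x * (log y - log x) ≤ x * (y / x - 1) := mul_le_mul_of_nonneg_left hlog hx.le
    _ = y - x := by field_simp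

theorem Real.sum_mul_log_sub_log_le_sum_sub {ι : Type*} (s : Finset ι) {p p' : ι → ℝ}
    (hp : ∀ i ∈ s, 0 < p i) (hp' : ∀ i ∈ s, 0 < p' i) :
    ∑ i ∈ s, p i * (log (p' i) - log (p i)) ≤ ∑ i ∈ s, p' i - ∑ i ∈ s, p i := by
  rw [← sum_sub_distrib]
  exact sum_le_sum fun i hi => mul_log_sub_log_le_sub (hp i hi) (hp' i hi)

/-- Monotonicity of the EM iteration: if `p, p' : Z → ℝ` are positive complete-data
likelihoods over a finite latent space, `P = Σ_z p z` and `q z = p z / P` is the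
posterior, and the EM `Q`-function does not decrease, i.e.
`Σ_z q z·log (p' z) ≥ Σ_z q z·log (p z)`, then the observed-data likelihood does not
decrease: `Σ_z p' z ≥ Σ_z p z`. -/
theorem em_monotonicity
    {Z : Type*} [Fintype Z] (p p' : Z → ℝ)
    (hp : ∀ z, 0 < p z) (hp' : ∀ z, 0 < p' z)
    (hQ : (∑ z, (p z / ∑ z', p z') * Real.log (p z)) ≤
      (∑ z, (p z / ∑ z', p z') * Real.log (p' z))) :
    (∑ z, p z) ≤ ∑ z, p' z := by
  cases isEmpty_or_nonempty Z with
  | inl _ => simp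
  | inr _ =>
  have hP : 0 < ∑ z, p z := sum_pos (fun z _ => hp z) univ_nonempty
  have hQ_gain : 0 ≤ ∑ z, p z * (log (p' z) - log (p z)) := by
    simp_rw [div_mul_eq_mul_div, ← sum_div] at hQ
    simpa only [mul_sub, sum_sub_distrib, sub_nonneg] using (div_le_div_iff_of_pos_right hP).mp hQ
  have := sum_mul_log_sub_log_le_sum_sub univ (fun z _ => hp z) (fun z _ => hp' z)
  linarith
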